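/- Let τ ∈ H and c ∈ ℂ. The function g(x) := c·exp(−πiτx²)·erfc(√(−iπτ)·x) (principal square root, which is well defined since Re(−iπτ) > 0) is bounded and differentiable on (0,∞), tends to 0 as x → ∞, and satisfies the differential equation g'(x) + 2πiτ·x·g(x) = −2√(−iτ)·c for all x > 0. Moreover, any bounded differentiable function h on (0,∞) satisfying h'(x) + 2πiτ·x·h(x) = −2√(−iτ)·c for all x > 0 is equal to g. -/

import Mathlib

open MeasureTheory Filter Set intervalIntegral

noncomputable section

/-- The entire extension of the complementary error function:
`erfc(z) = 1 - (2/√π)∫_0^1 z·e^{-z²t²} dt`. -/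
def erfcC (z : ℂ) : ℂ :=
  1 - (2 / Real.sqrt Real.pi) * ∫ t in (0:ℝ)..1, z * Complex.exp (-(z ^ 2) * (t : ℂ) ^ 2)

/-- Principal square root of a complex number. -/
def csqrt (z : ℂ) : ℂ := z ^ (1 / 2 : ℂ)

/-!
With `a = √(-iπτ)` and `β = Re a² > 0`, the function is `g(x) = c·e^{a²x²}·erfc(a x)`.
The substitution `t ↦ x t` gives `erfc(a x) = 1 - (2/√π)∫₀ˣ a e^{-a²t²} dt`, so the
differential equation is the fundamental theorem of calculus. The complex Gaussian integral
`∫₀^∞ a e^{-a²t²} dt = √π/2` turns `erfc(a x)` into the tail `(2/√π)∫ₓ^∞ a e^{-a²t²} dt`,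
and `e^{-βt²} ≤ e^{βx² - 2βxt}` bounds `|g(x)|` by `K/x`; continuity then gives boundedness.
If `h` is another bounded solution, `(h - g)·e^{-a²x²}` has zero derivative on `(0, ∞)` and
norm at most `C e^{-βx²} → 0`, so it vanishes.
-/

open Complex

lemma csqrt_sq (z : ℂ) : csqrt z ^ 2 = z := by
  rw [csqrt, one_div]
  exact cpow_ofNat_inv_pow z 2

lemma csqrt_re_nonneg (z : ℂ) : 0 ≤ (csqrt z).re := by
  rw [csqrt, one_div, cpow_inv_two_re]
  exact Real.sqrt_nonneg _

lemma csqrt_re_pos {z : ℂ} (hz : 0 < z.re) : 0 < (csqrt z).re := by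
  rw [csqrt, one_div, cpow_inv_two_re]
  exact Real.sqrt_pos.2 (by linarith [re_le_norm z])

lemma csqrt_eq_of_sq_eq {z w : ℂ} (hw : 0 < w.re) (h : w ^ 2 = z) : csqrt z = w := by
  rcases sq_eq_sq_iff_eq_or_eq_neg.1 ((csqrt_sq z).trans h.symm) with h' | h'
  · exact h'
  · have := csqrt_re_nonneg z
    rw [h', neg_re] at this
    linarith

lemma csqrt_ofReal_mul {r : ℝ} (hr : 0 < r) {z : ℂ} (hz : 0 < z.re) :
    csqrt (r * z) = Real.sqrt r * csqrt z := by
  refine csqrt_eq_of_sq_eq ?_ ?_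
  · rw [re_ofReal_mul]
    exact mul_pos (Real.sqrt_pos.2 hr) (csqrt_re_pos hz)
  · rw [mul_pow, csqrt_sq, ← ofReal_pow, Real.sq_sqrt hr.le]

lemma integral_Ioi_exp_neg_mul_sq_le {β x : ℝ} (hβ : 0 < β) (hx : 0 < x) :
    ∫ t in Ioi x, Real.exp (-β * t ^ 2) ≤ Real.exp (-β * x ^ 2) / (2 * β * x) := by
  have hκ : 0 < 2 * β * x := by positivity
  -- `-β t² ≤ β x² - 2 β x t` is `β (t - x)² ≥ 0`
  have hle : ∀ t,
      Real.exp (-β * t ^ 2) ≤ Real.exp (β * x ^ 2) * Real.exp (-(2 * β * x) * t) := by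
    intro t
    rw [← Real.exp_add, Real.exp_le_exp]
    nlinarith [mul_nonneg hβ.le (sq_nonneg (t - x))]
  calc ∫ t in Ioi x, Real.exp (-β * t ^ 2)
      ≤ ∫ t in Ioi x, Real.exp (β * x ^ 2) * Real.exp (-(2 * β * x) * t) :=
        setIntegral_mono (integrable_exp_neg_mul_sq hβ).integrableOn
          ((exp_neg_integrableOn_Ioi x hκ).const_mul _) hle
    _ = Real.exp (β * x ^ 2) * (Real.exp (-(2 * β * x) * x) / (2 * β * x)) := by
        rw [MeasureTheory.integral_const_mul, integral_exp_mul_Ioi (by linarith) x, neg_div_neg_eq]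
    _ = Real.exp (-β * x ^ 2) / (2 * β * x) := by
        rw [mul_div_assoc', ← Real.exp_add]
        ring_nf

lemma Continuous.exists_forall_norm_le_of_tendsto_atTop {E : Type*} [NormedAddCommGroup E]
    {f : ℝ → E} {l : E} (hf : Continuous f) (hl : Tendsto f atTop (nhds l)) (a : ℝ) :
    ∃ C, ∀ x, a ≤ x → ‖f x‖ ≤ C := by
  obtain ⟨R, hR⟩ := eventually_atTop.1 (hl.norm.eventually (gt_mem_nhds (lt_add_one ‖l‖)))
  obtain ⟨C, hC⟩ := (isCompact_Icc (a := a) (b := R)).exists_bound_of_continuousOn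
    hf.continuousOn
  refine ⟨max C (‖l‖ + 1), fun x hx => ?_⟩
  rcases le_total x R with hxR | hxR
  · exact (hC x ⟨hx, hxR⟩).trans (le_max_left _ _)
  · exact (hR x hxR).le.trans (le_max_right _ _)

lemma eq_zero_of_hasDerivAt_eq_mul_of_bounded {b : ℂ} (hb : 0 < b.re) {d : ℝ → ℂ}
    (hd : ∀ x, 0 < x → HasDerivAt d (2 * b * x * d x) x)
    (hbdd : ∃ C, ∀ x, 0 < x → ‖d x‖ ≤ C) {x : ℝ} (hx : 0 < x) : d x = 0 := by
  obtain ⟨C, hC⟩ := hbdd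
  set φ : ℝ → ℂ := fun y => d y * cexp (-b * y ^ 2)
  have hφ : ∀ y, 0 < y → HasDerivAt φ 0 y := by
    intro y hy
    have hexp : HasDerivAt (fun y : ℝ => -b * (y : ℂ) ^ 2) (-b * (2 * y)) y := by
      refine (((hasDerivAt_id y).ofReal_comp.fun_pow 2).const_mul (-b)).congr_deriv ?_
      simp only [id, Nat.cast_ofNat, ofReal_one]
      ring
    refine ((hd y hy).mul hexp.cexp).congr_deriv ?_
    ring
  have hconst : ∀ y, 0 < y → φ y = φ x := fun y hy =>
    isOpen_Ioi.is_const_of_deriv_eq_zero isPreconnected_Ioi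
      (fun z hz => (hφ z hz).differentiableAt.differentiableWithinAt)
      (fun z hz => (hφ z hz).deriv) hy hx
  have hsmall : Tendsto (fun y : ℝ => C * Real.exp (-b.re * y ^ 2)) atTop (nhds 0) := by
    have hsq : Tendsto (fun y : ℝ => -b.re * y ^ 2) atTop atBot :=
      (tendsto_pow_atTop two_ne_zero).const_mul_atTop_of_neg (neg_neg_of_pos hb)
    simpa using (Real.tendsto_exp_atBot.comp hsq).const_mul C
  have hφx : ‖φ x‖ ≤ 0 := by
    refine ge_of_tendsto hsmall ?_
    filter_upwards [eventually_gt_atTop 0] with y hy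
    rw [← hconst y hy, norm_mul, norm_cexp_neg_mul_sq]
    exact mul_le_mul_of_nonneg_right (hC y hy) (Real.exp_pos _).le
  exact (mul_eq_zero.1 (norm_le_zero_iff.1 hφx)).resolve_right (Complex.exp_ne_zero _)

lemma erfcC_ofReal_mul (a : ℂ) (x : ℝ) :
    erfcC (a * x) = 1 - 2 / Real.sqrt Real.pi * ∫ t in (0:ℝ)..x, a * cexp (-a ^ 2 * t ^ 2) := by
  have hsubst : (fun t : ℝ => a * x * cexp (-(a * x) ^ 2 * t ^ 2))
      = fun t : ℝ => x • (a * cexp (-a ^ 2 * ((t * x : ℝ) : ℂ) ^ 2)) := by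
    funext t
    push_cast
    rw [real_smul]
    ring_nf
  rw [erfcC, hsubst, intervalIntegral.integral_smul,
    intervalIntegral.smul_integral_comp_mul_right (fun t : ℝ => a * cexp (-a ^ 2 * t ^ 2)) x]
  simp

lemma integral_Ioi_zero_mul_cexp_neg_sq {a : ℂ} (ha : 0 < a.re) (ha2 : 0 < (a ^ 2).re) :
    ∫ t in Ioi (0:ℝ), a * cexp (-a ^ 2 * t ^ 2) = Real.sqrt Real.pi / 2 := by
  have ha0 : a ≠ 0 := fun h => by simp [h] at ha
  have hsqrt : (Real.pi / a ^ 2 : ℂ) ^ (1 / 2 : ℂ) = Real.sqrt Real.pi / a := by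
    refine csqrt_eq_of_sq_eq ?_ ?_
    · rw [div_eq_mul_inv, re_ofReal_mul, inv_re]
      exact mul_pos (Real.sqrt_pos.2 Real.pi_pos) (div_pos ha (normSq_pos.2 ha0))
    · rw [div_pow, ← ofReal_pow, Real.sq_sqrt Real.pi_pos.le]
  rw [MeasureTheory.integral_const_mul, integral_gaussian_complex_Ioi ha2, hsqrt]
  field_simp

lemma erfcC_ofReal_mul_eq_integral_Ioi {a : ℂ} (ha : 0 < a.re) (ha2 : 0 < (a ^ 2).re)
    {x : ℝ} (hx : 0 ≤ x) :
    erfcC (a * x) = 2 / Real.sqrt Real.pi * ∫ t in Ioi x, a * cexp (-a ^ 2 * t ^ 2) := by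
  have hint : Integrable fun t : ℝ => a * cexp (-a ^ 2 * t ^ 2) :=
    (integrable_cexp_neg_mul_sq ha2).const_mul a
  have hsplit := integral_Ioi_zero_mul_cexp_neg_sq ha ha2
  rw [← Ioc_union_Ioi_eq_Ioi hx, setIntegral_union (Ioc_disjoint_Ioi le_rfl) measurableSet_Ioi
    hint.integrableOn hint.integrableOn, ← intervalIntegral.integral_of_le hx] at hsplit
  have hπ2 : 2 / (Real.sqrt Real.pi : ℂ) * (Real.sqrt Real.pi / 2) = 1 := by field_simp
  rw [erfcC_ofReal_mul]
  linear_combination -(2 / (Real.sqrt Real.pi : ℂ)) * hsplit - hπ2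

lemma hasDerivAt_erfcC_ofReal_mul (a : ℂ) (x : ℝ) :
    HasDerivAt (fun y : ℝ => erfcC (a * y))
      (-(2 / Real.sqrt Real.pi * (a * cexp (-a ^ 2 * x ^ 2)))) x := by
  have hcont : Continuous fun t : ℝ => a * cexp (-a ^ 2 * t ^ 2) := by fun_prop
  simp_rw [erfcC_ofReal_mul]
  exact ((hcont.integral_hasStrictDerivAt 0 x).hasDerivAt.const_mul _).const_sub 1

def erfcxC (z : ℂ) : ℂ := cexp (z ^ 2) * erfcC z

lemma hasDerivAt_erfcxC_ofReal_mul (a : ℂ) (x : ℝ) :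
    HasDerivAt (fun y : ℝ => erfcxC (a * y))
      (2 * a ^ 2 * x * erfcxC (a * x) - 2 / Real.sqrt Real.pi * a) x := by
  have hsq : HasDerivAt (fun y : ℝ => (a * y) ^ 2) (2 * a ^ 2 * x) x := by
    refine (((hasDerivAt_id x).ofReal_comp.const_mul a).fun_pow 2).congr_deriv ?_
    simp only [id, Nat.cast_ofNat, ofReal_one]
    ring
  have hcancel : cexp ((a * x) ^ 2) * cexp (-a ^ 2 * x ^ 2) = 1 := by
    rw [← Complex.exp_add]
    ring_nf
    exact Complex.exp_zero
  refine (hsq.cexp.mul (hasDerivAt_erfcC_ofReal_mul a x)).congr_deriv ?_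
  rw [erfcxC]
  linear_combination -(2 / Real.sqrt Real.pi * a) * hcancel

lemma norm_erfcxC_ofReal_mul_le {a : ℂ} (ha : 0 < a.re) (ha2 : 0 < (a ^ 2).re) {x : ℝ}
    (hx : 0 < x) : ‖erfcxC (a * x)‖ ≤ ‖a‖ / (Real.sqrt Real.pi * (a ^ 2).re * x) := by
  set β := (a ^ 2).re
  have htail : ‖∫ t in Ioi x, a * cexp (-a ^ 2 * t ^ 2)‖
      ≤ ‖a‖ * (Real.exp (-β * x ^ 2) / (2 * β * x)) :=
    calc ‖∫ t in Ioi x, a * cexp (-a ^ 2 * t ^ 2)‖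
        ≤ ∫ t in Ioi x, ‖a * cexp (-a ^ 2 * t ^ 2)‖ := norm_integral_le_integral_norm _
      _ = ‖a‖ * ∫ t in Ioi x, Real.exp (-β * t ^ 2) := by
          simp_rw [norm_mul, norm_cexp_neg_mul_sq]
          exact MeasureTheory.integral_const_mul _ _
      _ ≤ ‖a‖ * (Real.exp (-β * x ^ 2) / (2 * β * x)) :=
          mul_le_mul_of_nonneg_left (integral_Ioi_exp_neg_mul_sq_le ha2 hx) (norm_nonneg a)
  have hexp : ‖cexp ((a * x) ^ 2)‖ = Real.exp (β * x ^ 2) := by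
    simpa [mul_pow] using norm_cexp_neg_mul_sq (-a ^ 2) x
  have hπ : 0 < Real.sqrt Real.pi := Real.sqrt_pos.2 Real.pi_pos
  rw [erfcxC, erfcC_ofReal_mul_eq_integral_Ioi ha ha2 hx.le, norm_mul, norm_mul, hexp, norm_div,
    norm_real, Real.norm_of_nonneg hπ.le, Complex.norm_two]
  calc Real.exp (β * x ^ 2) * (2 / Real.sqrt Real.pi * ‖∫ t in Ioi x, a * cexp (-a ^ 2 * t ^ 2)‖)
      ≤ Real.exp (β * x ^ 2) * (2 / Real.sqrt Real.pi *
          (‖a‖ * (Real.exp (-β * x ^ 2) / (2 * β * x)))) := by gcongr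
    _ = ‖a‖ / (Real.sqrt Real.pi * β * x) * (Real.exp (β * x ^ 2) * Real.exp (-β * x ^ 2)) :=
        by field_simp
    _ = ‖a‖ / (Real.sqrt Real.pi * β * x) := by
        rw [← Real.exp_add, neg_mul, add_neg_cancel, Real.exp_zero, mul_one]

lemma tendsto_erfcxC_ofReal_mul_atTop {a : ℂ} (ha : 0 < a.re) (ha2 : 0 < (a ^ 2).re) :
    Tendsto (fun x : ℝ => erfcxC (a * x)) atTop (nhds 0) := by
  set K := ‖a‖ / (Real.sqrt Real.pi * (a ^ 2).re)
  have hdecay : Tendsto (fun x : ℝ => K * x⁻¹) atTop (nhds 0) := by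
    simpa using tendsto_inv_atTop_zero.const_mul K
  refine squeeze_zero_norm' ?_ hdecay
  filter_upwards [eventually_gt_atTop 0] with x hx
  rw [← div_eq_mul_inv, div_div]
  exact norm_erfcxC_ofReal_mul_le ha ha2 hx

lemma continuous_erfcxC_ofReal_mul (a : ℂ) : Continuous fun x : ℝ => erfcxC (a * x) :=
  continuous_iff_continuousAt.2 fun x => (hasDerivAt_erfcxC_ofReal_mul a x).continuousAt

lemma exists_norm_erfcxC_ofReal_mul_le {a : ℂ} (ha : 0 < a.re) (ha2 : 0 < (a ^ 2).re) :
    ∃ C, ∀ x : ℝ, 0 ≤ x → ‖erfcxC (a * x)‖ ≤ C :=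
  (continuous_erfcxC_ofReal_mul a).exists_forall_norm_le_of_tendsto_atTop
    (tendsto_erfcxC_ofReal_mul_atTop ha ha2) 0

lemma eq_const_mul_erfcxC_ofReal_mul {a : ℂ} (ha : 0 < a.re) (ha2 : 0 < (a ^ 2).re) (c : ℂ)
    {h : ℝ → ℂ} (hbdd : ∃ C, ∀ x, 0 < x → ‖h x‖ ≤ C)
    (hh : ∀ x, 0 < x → HasDerivAt h (2 * a ^ 2 * x * h x - 2 / Real.sqrt Real.pi * a * c) x)
    {x : ℝ} (hx : 0 < x) : h x = c * erfcxC (a * x) := by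
  obtain ⟨Ch, hCh⟩ := hbdd
  obtain ⟨C, hC⟩ := exists_norm_erfcxC_ofReal_mul_le ha ha2
  rw [← sub_eq_zero]
  refine eq_zero_of_hasDerivAt_eq_mul_of_bounded (d := fun y => h y - c * erfcxC (a * y)) ha2
    (fun y hy => ?_) ⟨Ch + ‖c‖ * C, fun y hy => ?_⟩ hx
  · exact ((hh y hy).sub ((hasDerivAt_erfcxC_ofReal_mul a y).const_mul c)).congr_deriv (by ring)
  · refine (norm_sub_le _ _).trans (add_le_add (hCh y hy) ?_)
    rw [norm_mul]
    exact mul_le_mul_of_nonneg_left (hC y hy.le) (norm_nonneg c)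

/-- properties and uniqueness of
`g(x) = c·exp(-πiτx²)·erfc(√(-iπτ)·x)` on `(0,∞)`. -/
theorem stmt1 (τ : ℂ) (hτ : 0 < τ.im) (c : ℂ) (g : ℝ → ℂ)
    (hg : ∀ x : ℝ, g x =
      c * Complex.exp (-(Real.pi : ℂ) * Complex.I * τ * (x : ℂ) ^ 2) *
        erfcC (csqrt (-Complex.I * (Real.pi : ℂ) * τ) * (x : ℂ))) :
    (∃ C : ℝ, ∀ x : ℝ, 0 < x → ‖g x‖ ≤ C) ∧
    (∀ x : ℝ, 0 < x → DifferentiableAt ℝ g x) ∧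
    Tendsto g atTop (nhds 0) ∧
    (∀ x : ℝ, 0 < x →
      deriv g x + 2 * (Real.pi : ℂ) * Complex.I * τ * (x : ℂ) * g x =
        -2 * csqrt (-Complex.I * τ) * c) ∧
    (∀ h : ℝ → ℂ, (∃ C : ℝ, ∀ x : ℝ, 0 < x → ‖h x‖ ≤ C) →
      (∀ x : ℝ, 0 < x → DifferentiableAt ℝ h x) →
      (∀ x : ℝ, 0 < x →
        deriv h x + 2 * (Real.pi : ℂ) * Complex.I * τ * (x : ℂ) * h x =
          -2 * csqrt (-Complex.I * τ) * c) →
      ∀ x : ℝ, 0 < x → h x = g x) := by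
  set a := csqrt (-I * Real.pi * τ)
  have hb : 0 < (-I * Real.pi * τ).re := by simpa using mul_pos Real.pi_pos hτ
  have ha : 0 < a.re := csqrt_re_pos hb
  have ha2 : a ^ 2 = -I * Real.pi * τ := csqrt_sq _
  have ha2re : 0 < (a ^ 2).re := ha2 ▸ hb
  have hroot : a = Real.sqrt Real.pi * csqrt (-I * τ) := by
    rw [← csqrt_ofReal_mul Real.pi_pos (by simpa using hτ), ← mul_assoc, mul_comm (Real.pi : ℂ)]
  have hode_iff : ∀ (x : ℝ) (v w : ℂ), v + 2 * Real.pi * I * τ * x * w = -2 * csqrt (-I * τ) * c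
      ↔ v = 2 * a ^ 2 * x * w - 2 / Real.sqrt Real.pi * a * c := by
    intro x v w
    have hπ : (Real.sqrt Real.pi : ℂ) ≠ 0 := ofReal_ne_zero.2 (Real.sqrt_pos.2 Real.pi_pos).ne'
    rw [ha2, hroot, ← mul_assoc (2 / _), div_mul_cancel₀ 2 hπ]
    constructor <;> intro h <;> linear_combination h
  have hg' : g = fun x : ℝ => c * erfcxC (a * x) := by
    funext x
    rw [hg, erfcxC, mul_pow, ha2]
    ring_nf
  have hderiv (x : ℝ) : HasDerivAt g (2 * a ^ 2 * x * g x - 2 / Real.sqrt Real.pi * a * c) x := by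
    rw [hg']
    exact ((hasDerivAt_erfcxC_ofReal_mul a x).const_mul c).congr_deriv (by ring)
  obtain ⟨C, hC⟩ := exists_norm_erfcxC_ofReal_mul_le ha ha2re
  refine ⟨⟨‖c‖ * C, fun x hx => ?_⟩, fun x _ => (hderiv x).differentiableAt, ?_,
    fun x _ => (hode_iff x _ _).2 (hderiv x).deriv, fun h hbdd hdiff hode x hx => ?_⟩
  · rw [hg', norm_mul]
    exact mul_le_mul_of_nonneg_left (hC x hx.le) (norm_nonneg c)
  · simpa [hg'] using (tendsto_erfcxC_ofReal_mul_atTop ha ha2re).const_mul c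
  · rw [hg']
    exact eq_const_mul_erfcxC_ofReal_mul ha ha2re c hbdd
      (fun y hy => (hdiff y hy).hasDerivAt.congr_deriv ((hode_iff y _ _).1 (hode y hy))) hx
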